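/- Let Q_j(n) ~ P_{1,j}(n) be the number of white balls after n draws in the classical Pólya urn started with 1 black and j white balls, and let V_j ~ Beta(j,1). Then there is a coupling of Q_j(n) and V_j on a common probability space such that |Q_j(n) − n·V_j| < j+1 almost surely. -/

import Mathlib

/-!
Couple both variables to one uniform `ω ∈ (0, 1]`: let `Q` be the quantile of `ω` for the CDF
`F k = C(k, j) / C(n + j, j)` of `Q_j(n)`, and `V = ω ^ (1 / j)`, so that
`F (Q - 1) < V ^ j ≤ F Q`.
Writing `F k = ∏_{i < j} (k - i) / (n + j - i)`, every factor lies between `(k + 1 - j) / (n + 1)`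
and `k / (n + j)`, which squeezes `n V` between `Q - j - 1` and `Q`. That `F` is the CDF of the
urn is checked by induction on `n`: `F k - F (k - 1)` satisfies the recursion of `polyaPMF`.
-/

open MeasureTheory Set

/-- Probability mass function of the number of white balls after `n` draws in the
classical Pólya urn started with `b` black and `w` white balls. -/
noncomputable def polyaPMF (b w : ℕ) : ℕ → ℕ → ℝ
  | 0 => fun k => if k = w then 1 else 0
  | n + 1 => fun k =>
      polyaPMF b w n k * (1 - (k : ℝ) / ((w + b + n : ℕ) : ℝ)) +
      polyaPMF b w n (k - 1) * (((k : ℝ) - 1) / ((w + b + n : ℕ) : ℝ))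

section Quantile

variable {F : ℕ → ℝ} {x : ℝ}

noncomputable def natQuantile (F : ℕ → ℝ) (x : ℝ) : ℕ := sInf {m | x ≤ F m}

lemma natQuantile_eq_zero_iff : natQuantile F x = 0 ↔ x ≤ F 0 ∨ ∀ m, F m < x := by
  simp [natQuantile, Nat.sInf_eq_zero, Set.eq_empty_iff_forall_notMem]

lemma natQuantile_eq_succ_iff (hF : Monotone F) (k : ℕ) :
    natQuantile F x = k + 1 ↔ x ∈ Ioc (F k) (F (k + 1)) := by
  rw [natQuantile, Nat.sInf_upward_closed_eq_succ_iff fun a b hab ha => ha.trans (hF hab)]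
  simp [and_comm]

lemma natQuantile_ne_zero (h0 : F 0 < x) (h1 : ∃ N, x ≤ F N) : natQuantile F x ≠ 0 := by
  obtain ⟨N, hN⟩ := h1
  rw [Ne, natQuantile_eq_zero_iff, not_or, not_le, not_forall]
  exact ⟨h0, N, hN.not_gt⟩

lemma measurable_natQuantile (hF : Monotone F) : Measurable (natQuantile F) := by
  refine measurable_to_countable' fun k => ?_
  rcases k with _ | k
  · have : natQuantile F ⁻¹' {0} = Iic (F 0) ∪ ⋂ m, Ioi (F m) := by
      ext x
      simp [natQuantile_eq_zero_iff]
    rw [this]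
    exact measurableSet_Iic.union (MeasurableSet.iInter fun _ => measurableSet_Ioi)
  · have : natQuantile F ⁻¹' {k + 1} = Ioc (F k) (F (k + 1)) := by
      ext x
      exact natQuantile_eq_succ_iff hF k
    rw [this]
    exact measurableSet_Ioc

lemma uniform_natQuantile_eq_zero (hF0 : F 0 ≤ 0) (hF1 : ∃ N, 1 ≤ F N) :
    volume.restrict (Ioc 0 1) {x | natQuantile F x = 0} = 0 := by
  have : {x | natQuantile F x = 0} ∩ Ioc 0 1 = ∅ :=
    eq_empty_of_forall_notMem fun x ⟨hx, hx0, hx1⟩ =>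
      natQuantile_ne_zero (hF0.trans_lt hx0) (hF1.imp fun _ hN => hx1.trans hN) hx
  rw [Measure.restrict_apply' measurableSet_Ioc, this, measure_empty]

lemma uniform_natQuantile_eq_succ (hF : Monotone F) {k : ℕ} (h0 : 0 ≤ F k)
    (h1 : F (k + 1) ≤ 1) :
    volume.restrict (Ioc 0 1) {x | natQuantile F x = k + 1} =
      ENNReal.ofReal (F (k + 1) - F k) := by
  have : {x | natQuantile F x = k + 1} = Ioc (F k) (F (k + 1)) := by
    ext x
    exact natQuantile_eq_succ_iff hF k
  rw [this, Measure.restrict_apply' measurableSet_Ioc, inter_eq_left.2 (Ioc_subset_Ioc h0 h1),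
    Real.volume_Ioc]

end Quantile

lemma uniform_rpow_inv_le {p : ℝ} (hp : 0 < p) {x : ℝ} (hx : x ∈ Icc (0 : ℝ) 1) :
    volume.restrict (Ioc 0 1) {ω : ℝ | ω ^ p⁻¹ ≤ x} = ENNReal.ofReal (x ^ p) := by
  have : {ω : ℝ | ω ^ p⁻¹ ≤ x} ∩ Ioc 0 1 = Ioc 0 (x ^ p) := by
    ext ω
    simp only [mem_inter_iff, mem_ofPred_eq, mem_Ioc]
    constructor
    · rintro ⟨h, hω, -⟩
      exact ⟨hω, (Real.rpow_inv_le_iff_of_pos hω.le hx.1 hp).1 h⟩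
    · rintro ⟨hω, h⟩
      exact ⟨(Real.rpow_inv_le_iff_of_pos hω.le hx.1 hp).2 h, hω,
        h.trans (Real.rpow_le_one hx.1 hx.2 hp.le)⟩
  rw [Measure.restrict_apply' measurableSet_Ioc, this, Real.volume_Ioc, sub_zero]

lemma antitone_natSub_div_natSub {m N : ℕ} (h : m ≤ N) :
    Antitone fun i : ℕ => ((m - i : ℕ) : ℝ) / ((N - i : ℕ) : ℝ) := by
  intro a b hab
  dsimp only
  rcases le_or_gt m b with hmb | hbm
  · rw [Nat.sub_eq_zero_of_le hmb, Nat.cast_zero, zero_div]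
    positivity
  · have hN : (0 : ℝ) < ((N - b : ℕ) : ℝ) := Nat.cast_pos.2 (by omega)
    have hN' : (0 : ℝ) < ((N - a : ℕ) : ℝ) := Nat.cast_pos.2 (by omega)
    rw [div_le_div_iff₀ hN hN']
    have hab' : (a : ℝ) ≤ b := Nat.cast_le.2 hab
    have hmN : (m : ℝ) ≤ N := Nat.cast_le.2 h
    push_cast [Nat.cast_sub (show b ≤ m by omega), Nat.cast_sub (show a ≤ m by omega),
      Nat.cast_sub (show b ≤ N by omega), Nat.cast_sub (show a ≤ N by omega)]
    nlinarith [mul_nonneg (sub_nonneg.2 hab') (sub_nonneg.2 hmN)]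

lemma descFactorial_div_descFactorial_eq_prod (m N j : ℕ) :
    (m.descFactorial j : ℝ) / N.descFactorial j =
      ∏ i ∈ Finset.range j, ((m - i : ℕ) : ℝ) / ((N - i : ℕ) : ℝ) := by
  simp only [Nat.descFactorial_eq_prod_range, Nat.cast_prod, Finset.prod_div_distrib]

lemma descFactorial_div_descFactorial_le_pow {m N : ℕ} (h : m ≤ N) (j : ℕ) :
    (m.descFactorial j : ℝ) / N.descFactorial j ≤ ((m : ℝ) / N) ^ j := by
  rw [descFactorial_div_descFactorial_eq_prod]
  calc _ ≤ ∏ _i ∈ Finset.range j, ((m - 0 : ℕ) : ℝ) / ((N - 0 : ℕ) : ℝ) :=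
        Finset.prod_le_prod (fun _ _ => by positivity)
          fun i _ => antitone_natSub_div_natSub h (Nat.zero_le i)
    _ = _ := by simp [div_pow]

lemma pow_le_descFactorial_div_descFactorial {m N : ℕ} (h : m ≤ N) (j : ℕ) :
    (((m - j : ℕ) : ℝ) / ((N - j : ℕ) : ℝ)) ^ (j + 1) ≤
      (m.descFactorial (j + 1) : ℝ) / N.descFactorial (j + 1) := by
  rw [descFactorial_div_descFactorial_eq_prod]
  calc _ = ∏ _i ∈ Finset.range (j + 1), ((m - j : ℕ) : ℝ) / ((N - j : ℕ) : ℝ) := by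
        simp [div_pow]
    _ ≤ _ := Finset.prod_le_prod (fun _ _ => by positivity)
          fun i hi => antitone_natSub_div_natSub h (Nat.lt_succ_iff.1 (Finset.mem_range.1 hi))

/-- `C(min k (n + j), j) / C(n + j, j)`, the CDF of `Q_j(n)`. -/
noncomputable def polyaCDF (j n k : ℕ) : ℝ :=
  ((min k (n + j)).descFactorial j : ℝ) / (n + j).descFactorial j

section PolyaCDF

variable {j n k : ℕ}

lemma polyaCDF_nonneg : 0 ≤ polyaCDF j n k := by
  unfold polyaCDF
  positivity

lemma polyaCDF_of_lt (hk : k < j) : polyaCDF j n k = 0 := by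
  rw [polyaCDF, Nat.descFactorial_eq_zero_iff_lt.2 (by omega), Nat.cast_zero, zero_div]

lemma polyaCDF_of_le (hk : n + j ≤ k) : polyaCDF j n k = 1 := by
  rw [polyaCDF, min_eq_right hk, div_self]
  exact Nat.cast_ne_zero.2 (Nat.descFactorial_eq_zero_iff_lt.not.2 (by omega))

lemma polyaCDF_mono : Monotone (polyaCDF j n) := fun k k' hk => by
  unfold polyaCDF
  gcongr

lemma polyaCDF_le_one : polyaCDF j n k ≤ 1 :=
  (polyaCDF_mono (le_max_left k (n + j))).trans (polyaCDF_of_le (le_max_right _ _)).le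

lemma polyaCDF_succ (hj : 1 ≤ j) (n k : ℕ) :
    polyaCDF j (n + 1) k = polyaCDF j n k * (1 - k / ((n + 1 + j : ℕ) : ℝ)) +
      polyaCDF j n (k - 1) * (k / ((n + 1 + j : ℕ) : ℝ)) := by
  rcases lt_or_ge k j with hkj | hjk
  · rw [polyaCDF_of_lt hkj, polyaCDF_of_lt hkj, polyaCDF_of_lt (by omega)]
    ring
  rcases le_or_gt (n + 1 + j) k with hNk | hkN
  · rw [polyaCDF_of_le hNk, polyaCDF_of_le (by omega), polyaCDF_of_le (by omega)]
    ring
  obtain ⟨k, rfl⟩ : ∃ k', k = k' + 1 := ⟨k - 1, by omega⟩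
  have hA : ((k + 1 - j : ℕ) : ℝ) * (k + 1).descFactorial j =
      (k + 1 : ℕ) * k.descFactorial j := by
    exact_mod_cast Nat.succ_descFactorial k j
  have hB : ((n + 1 : ℕ) : ℝ) * (n + j + 1).descFactorial j =
      (n + j + 1 : ℕ) * (n + j).descFactorial j := by
    have := Nat.succ_descFactorial (n + j) j
    rw [show n + j + 1 - j = n + 1 by omega] at this
    exact_mod_cast this
  have hB0 : ((n + j).descFactorial j : ℝ) ≠ 0 :=
    Nat.cast_ne_zero.2 (Nat.descFactorial_eq_zero_iff_lt.not.2 (by omega))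
  have hB0' : ((n + j + 1).descFactorial j : ℝ) ≠ 0 :=
    Nat.cast_ne_zero.2 (Nat.descFactorial_eq_zero_iff_lt.not.2 (by omega))
  simp only [polyaCDF, show n + 1 + j = n + j + 1 by omega, Nat.add_sub_cancel,
    min_eq_left (show k + 1 ≤ n + j + 1 by omega), min_eq_left (show k + 1 ≤ n + j by omega),
    min_eq_left (show k ≤ n + j by omega)]
  push_cast [Nat.cast_sub hjk] at hA hB ⊢
  field_simp
  linear_combination
    ((n + j + 1).descFactorial j : ℝ) * hA - ((k + 1).descFactorial j : ℝ) * hB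

lemma polyaPMF_eq_sub (hj : 1 ≤ j) (n k : ℕ) :
    polyaPMF 1 j n k = polyaCDF j n k - polyaCDF j n (k - 1) := by
  induction n generalizing k with
  | zero =>
    simp only [polyaPMF]
    rcases lt_trichotomy k j with hkj | rfl | hjk
    · rw [if_neg hkj.ne, polyaCDF_of_lt hkj, polyaCDF_of_lt (by omega), sub_zero]
    · rw [if_pos rfl, polyaCDF_of_le (by omega), polyaCDF_of_lt (by omega), sub_zero]
    · rw [if_neg hjk.ne', polyaCDF_of_le (by omega), polyaCDF_of_le (by omega), sub_self]
  | succ n ih =>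
    simp only [polyaPMF]
    rw [show j + 1 + n = n + 1 + j by omega, ih, ih, polyaCDF_succ hj, polyaCDF_succ hj]
    rcases Nat.eq_zero_or_pos k with rfl | hk
    · simp
    · rw [Nat.cast_sub hk, Nat.cast_one]
      ring

lemma mul_le_of_pow_le_polyaCDF (hj : j ≠ 0) {v : ℝ} (hv : 0 ≤ v)
    (h : v ^ j ≤ polyaCDF j n k) : n * v ≤ k := by
  have hN : (0 : ℝ) < (n + j : ℕ) := Nat.cast_pos.2 (by omega)
  have hpow : v ^ j ≤ ((k : ℝ) / (n + j : ℕ)) ^ j :=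
    calc v ^ j ≤ polyaCDF j n k := h
      _ ≤ (((min k (n + j) : ℕ) : ℝ) / (n + j : ℕ)) ^ j :=
        descFactorial_div_descFactorial_le_pow (min_le_right _ _) j
      _ ≤ ((k : ℝ) / (n + j : ℕ)) ^ j := by gcongr; exact min_le_left _ _
  have hv' : v * (n + j : ℕ) ≤ k :=
    (le_div_iff₀ hN).1 ((pow_le_pow_iff_left₀ hv (by positivity) hj).1 hpow)
  push_cast at hv'
  linarith [mul_nonneg hv (Nat.cast_nonneg (α := ℝ) j)]

lemma sub_lt_mul_of_polyaCDF_lt_pow (hj : 1 ≤ j) {v : ℝ} (hv0 : 0 ≤ v) (hv1 : v ≤ 1)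
    (h : polyaCDF j n k < v ^ j) : (k + 1 : ℝ) - j < (n + 1) * v := by
  have hkN : k < n + j := by
    by_contra! hk
    rw [polyaCDF_of_le hk] at h
    exact h.not_ge (pow_le_one₀ hv0 hv1)
  rcases lt_or_ge (k + 1) j with hkj | hjk
  · have : (k + 1 : ℝ) < j := by exact_mod_cast hkj
    exact (sub_neg.2 this).trans_le (by positivity)
  obtain ⟨j, rfl⟩ : ∃ j', j = j' + 1 := ⟨j - 1, by omega⟩
  have hbound := pow_le_descFactorial_div_descFactorial (min_le_right k (n + (j + 1))) j
  rw [min_eq_left hkN.le, show n + (j + 1) - j = n + 1 by omega] at hbound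
  have hroot : ((k - j : ℕ) : ℝ) / ((n + 1 : ℕ) : ℝ) < v :=
    lt_of_pow_lt_pow_left₀ (j + 1) hv0
      (hbound.trans_lt (by rwa [polyaCDF, min_eq_left hkN.le] at h))
  rw [div_lt_iff₀ (by positivity), Nat.cast_sub (by omega)] at hroot
  push_cast at hroot ⊢
  linarith

lemma abs_sub_mul_lt_of_pow_mem_Ioc (hj : 1 ≤ j) {v : ℝ} (hv0 : 0 ≤ v) (hv1 : v ≤ 1)
    (h : v ^ j ∈ Ioc (polyaCDF j n k) (polyaCDF j n (k + 1))) :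
    |((k + 1 : ℕ) : ℝ) - n * v| < j + 1 := by
  have upper := mul_le_of_pow_le_polyaCDF (by omega) hv0 h.2
  have lower := sub_lt_mul_of_polyaCDF_lt_pow hj hv0 hv1 h.1
  push_cast at upper ⊢
  rw [abs_lt]
  constructor <;> linarith

end PolyaCDF

/-- There is a coupling of `Q_j(n) ~ P_{1,j}(n)` (classical Pólya urn with 1 black
and `j` white balls) and `V_j ~ Beta(j,1)` such that `|Q_j(n) − n V_j| < j + 1`
almost surely. -/
theorem polya_beta_coupling (j n : ℕ) (hj : 1 ≤ j) :
    ∃ (Ω : Type) (mΩ : MeasurableSpace Ω) (μ : Measure Ω) (_ : IsProbabilityMeasure μ)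
      (Q : Ω → ℕ) (V : Ω → ℝ), Measurable Q ∧ Measurable V ∧
      (∀ k : ℕ, (μ {ω | Q ω = k}).toReal = polyaPMF 1 j n k) ∧
      (∀ x ∈ Icc (0:ℝ) 1, (μ {ω | V ω ≤ x}).toReal = x ^ j) ∧
      (∀ᵐ ω ∂μ, |(Q ω : ℝ) - (n : ℝ) * V ω| < (j : ℝ) + 1) := by
  have hF1 : ∃ N, 1 ≤ polyaCDF j n N := ⟨n + j, (polyaCDF_of_le le_rfl).ge⟩
  refine ⟨ℝ, inferInstance, volume.restrict (Ioc 0 1), ⟨by simp⟩, natQuantile (polyaCDF j n),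
    fun ω => ω ^ (j : ℝ)⁻¹, measurable_natQuantile polyaCDF_mono, by fun_prop,
    fun k => ?_, fun x hx => ?_, ?_⟩
  · rw [polyaPMF_eq_sub hj]
    rcases k with _ | k
    · rw [uniform_natQuantile_eq_zero (polyaCDF_of_lt hj).le hF1, polyaCDF_of_lt hj]
      simp
    · rw [uniform_natQuantile_eq_succ polyaCDF_mono polyaCDF_nonneg polyaCDF_le_one,
        ENNReal.toReal_ofReal (sub_nonneg.2 (polyaCDF_mono k.le_succ)), Nat.add_sub_cancel]
  · rw [uniform_rpow_inv_le (by positivity) hx, Real.rpow_natCast,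
      ENNReal.toReal_ofReal (pow_nonneg hx.1 j)]
  · rw [ae_restrict_iff' measurableSet_Ioc]
    refine ae_of_all _ fun ω hω => ?_
    obtain ⟨k, hk⟩ := Nat.exists_eq_succ_of_ne_zero <|
      natQuantile_ne_zero ((polyaCDF_of_lt hj).trans_lt hω.1) (hF1.imp fun _ => hω.2.trans)
    have hωk := (natQuantile_eq_succ_iff polyaCDF_mono k).1 hk
    have hv : (ω ^ (j : ℝ)⁻¹) ^ j = ω := Real.rpow_inv_natCast_pow hω.1.le (by omega)
    have hv0 : 0 ≤ ω ^ (j : ℝ)⁻¹ := Real.rpow_nonneg hω.1.le _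
    have hv1 : ω ^ (j : ℝ)⁻¹ ≤ 1 := Real.rpow_le_one hω.1.le hω.2 (by positivity)
    rw [hk]
    exact abs_sub_mul_lt_of_pow_mem_Ioc hj hv0 hv1 (by rwa [hv])
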